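/- Let $n \le q \le p < \infty$, let $h \in L_p(\mathbb{R}^n)$ be nonnegative, and let $d$ be the geodesic distance $d_q(\cdot,\cdot:h)$. Then $d$ is pseudoconvex with constant $64$: for every $x,y \in \mathbb{R}^n$ and every $z$ on the open line segment $(x,y)$, $d(x,z) + d(z,y) \le 64\, d(x,y)$. -/

import Mathlib

open MeasureTheory ENNReal Metric

noncomputable def cubeSup (n : ℕ) (q : ℝ) (w : (Fin n → ℝ) → ℝ≥0∞) (x y : Fin n → ℝ) : ℝ≥0∞ :=
  ⨆ (c : Fin n → ℝ) (r : ℝ) (_ : 0 < r) (_ : x ∈ closedBall c r) (_ : y ∈ closedBall c r),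
    ((∫⁻ u in closedBall c r, w u) / volume (closedBall c r)) ^ (1 / q)

noncomputable def deltaQ (n : ℕ) (q : ℝ) (w : (Fin n → ℝ) → ℝ≥0∞) (x y : Fin n → ℝ) : ℝ≥0∞ :=
  ENNReal.ofReal ‖x - y‖ * cubeSup n q w x y

noncomputable def geoQ (n : ℕ) (q : ℝ) (w : (Fin n → ℝ) → ℝ≥0∞) (x y : Fin n → ℝ) : ℝ≥0∞ :=
  ⨅ (m : ℕ) (z : ℕ → Fin n → ℝ) (_ : z 0 = x) (_ : z m = y),
    ∑ i ∈ Finset.range m, deltaQ n q w (z i) (z (i + 1))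

/-!
For `q ≥ n`, enlarging a cube by a factor `t ≥ 1` multiplies its volume by `tⁿ ≤ t^q`, so the
`q`-th root of the average of `w` over the small cube is at most `t` times the one over the large
cube. Hence, if both ends of a link `u v` lie within `R` of `z`, then
`δ(x, z) ≤ (‖x - z‖ + 2R) · sup_{Q ∋ u, v} (avg_Q w)^{1/q}`. Weighting these bounds by the link
lengths of a chain from `x` to `y` of length `L ≥ ‖x - y‖` and taking `R = ‖x - z‖ + L` gives
`δ(x, z) ≤ 5 ∑ δ(links)` whenever `‖x - z‖ ≤ ‖x - y‖`. So `d(x, z)` and `d(z, y)` are both at most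
`5 d(x, y)` for `z` on the segment, and `10 ≤ 64`.
-/

open Module Finset

theorem rpow_average_closedBall_le_of_le {E : Type*} [NormedAddCommGroup E] [NormedSpace ℝ E]
    [MeasurableSpace E] [BorelSpace E] [FiniteDimensional ℝ E] (μ : Measure E)
    [μ.IsAddHaarMeasure] {q : ℝ} (hq : (finrank ℝ E : ℝ) ≤ q) (w : E → ℝ≥0∞) (c : E)
    {r r' : ℝ} (hr : 0 < r) (hrr' : r ≤ r') :
    ((∫⁻ u in closedBall c r, w u ∂μ) / μ (closedBall c r)) ^ (1 / q) ≤
      ENNReal.ofReal (r' / r) *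
        ((∫⁻ u in closedBall c r', w u ∂μ) / μ (closedBall c r')) ^ (1 / q) := by
  have ht : 1 ≤ r' / r := (one_le_div hr).2 hrr'
  have hq0 : 0 ≤ 1 / q := one_div_nonneg.2 ((Nat.cast_nonneg _).trans hq)
  set K := ENNReal.ofReal ((r' / r) ^ finrank ℝ E)
  have hK0 : K ≠ 0 := by simp only [K, ne_eq, ENNReal.ofReal_eq_zero, not_le]; positivity
  have hvol : μ (closedBall c r') = K * μ (closedBall c r) := by
    rw [Measure.addHaar_closedBall_center μ c r, ← Measure.addHaar_closedBall_mul μ c (by positivity) hr.le,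
      div_mul_cancel₀ _ hr.ne']
  have hKq : K ^ (1 / q) ≤ ENNReal.ofReal (r' / r) := by
    rw [ENNReal.ofReal_rpow_of_nonneg (by positivity) (by positivity),
      ← Real.rpow_natCast_mul (by positivity)]
    refine ENNReal.ofReal_le_ofReal ?_
    conv_rhs => rw [← Real.rpow_one (r' / r)]
    exact Real.rpow_le_rpow_of_exponent_le ht
      (by rw [mul_one_div]; exact div_le_one_of_le₀ hq ((Nat.cast_nonneg _).trans hq))
  calc ((∫⁻ u in closedBall c r, w u ∂μ) / μ (closedBall c r)) ^ (1 / q)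
      ≤ ((∫⁻ u in closedBall c r', w u ∂μ) / μ (closedBall c r)) ^ (1 / q) := by
        gcongr ?_ ^ _
        exact ENNReal.div_le_div_right (lintegral_mono_set (closedBall_subset_closedBall hrr')) _
    _ = (K * ((∫⁻ u in closedBall c r', w u ∂μ) / μ (closedBall c r'))) ^ (1 / q) := by
        rw [hvol, ← mul_div_assoc, ENNReal.mul_div_mul_left _ _ hK0 ENNReal.ofReal_ne_top]
    _ ≤ _ := by
        rw [ENNReal.mul_rpow_of_nonneg _ _ hq0]
        gcongr

section Geodesic

variable {n : ℕ} {q : ℝ} (w : (Fin n → ℝ) → ℝ≥0∞)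

theorem le_cubeSup {x y c : Fin n → ℝ} {r : ℝ} (hr : 0 < r) (hx : x ∈ closedBall c r)
    (hy : y ∈ closedBall c r) :
    ((∫⁻ u in closedBall c r, w u) / volume (closedBall c r)) ^ (1 / q) ≤ cubeSup n q w x y :=
  le_iSup_of_le c <| le_iSup_of_le r <| le_iSup_of_le hr <| le_iSup_of_le hx <|
    le_iSup_of_le hy le_rfl

theorem cubeSup_comm (x y : Fin n → ℝ) : cubeSup n q w x y = cubeSup n q w y x :=
  le_antisymm
    (iSup_le fun _ => iSup_le fun _ => iSup_le fun hr => iSup_le fun hx => iSup_le fun hy =>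
      le_cubeSup w hr hy hx)
    (iSup_le fun _ => iSup_le fun _ => iSup_le fun hr => iSup_le fun hy => iSup_le fun hx =>
      le_cubeSup w hr hx hy)

theorem deltaQ_eq (x y : Fin n → ℝ) :
    deltaQ n q w x y = ENNReal.ofReal (dist x y) * cubeSup n q w x y := by
  rw [deltaQ, dist_eq_norm]

theorem deltaQ_comm (x y : Fin n → ℝ) : deltaQ n q w x y = deltaQ n q w y x := by
  rw [deltaQ_eq, deltaQ_eq, dist_comm, cubeSup_comm]

theorem geoQ_le_sum {x y : Fin n → ℝ} (m : ℕ) (zc : ℕ → Fin n → ℝ) (h0 : zc 0 = x)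
    (hm : zc m = y) : geoQ n q w x y ≤ ∑ i ∈ range m, deltaQ n q w (zc i) (zc (i + 1)) :=
  iInf_le_of_le m <| iInf_le_of_le zc <| iInf_le_of_le h0 <| iInf_le _ hm

theorem geoQ_le_deltaQ (x y : Fin n → ℝ) : geoQ n q w x y ≤ deltaQ n q w x y := by
  simpa using geoQ_le_sum w 1 (fun i => if i = 0 then x else y) rfl rfl

theorem geoQ_le_swap (x y : Fin n → ℝ) : geoQ n q w y x ≤ geoQ n q w x y := by
  refine le_iInf fun m => le_iInf fun zc => le_iInf fun h0 => le_iInf fun hm => ?_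
  calc geoQ n q w y x
      ≤ ∑ i ∈ range m, deltaQ n q w (zc (m - i)) (zc (m - (i + 1))) :=
        geoQ_le_sum w m (fun i => zc (m - i)) (by simpa using hm) (by simpa using h0)
    _ = ∑ i ∈ range m, deltaQ n q w (zc (m - 1 - i)) (zc (m - 1 - i + 1)) := by
        refine sum_congr rfl fun i hi => ?_
        rw [mem_range] at hi
        rw [deltaQ_comm, show m - (i + 1) = m - 1 - i by omega,
          show m - i = m - 1 - i + 1 by omega]
    _ = ∑ i ∈ range m, deltaQ n q w (zc i) (zc (i + 1)) :=
        sum_range_reflect (fun i => deltaQ n q w (zc i) (zc (i + 1))) m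

theorem geoQ_comm (x y : Fin n → ℝ) : geoQ n q w x y = geoQ n q w y x :=
  le_antisymm (geoQ_le_swap w y x) (geoQ_le_swap w x y)

variable {w}

/-- A cube of radius `r` containing `a, b` is enlarged, at the price of the factor `(r + R) / r`,
into one containing `u, v`; since `dist a b ≤ 2 r`, the factor becomes the additive term `2 R`. -/
theorem deltaQ_le_mul_cubeSup (hq : (n : ℝ) ≤ q) {a b u v : Fin n → ℝ} {R : ℝ}
    (hu : dist u b ≤ R) (hv : dist v b ≤ R) :
    deltaQ n q w a b ≤ ENNReal.ofReal (dist a b + 2 * R) * cubeSup n q w u v := by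
  have hR : 0 ≤ R := dist_nonneg.trans hu
  rw [deltaQ_eq, cubeSup, ENNReal.mul_iSup]
  refine iSup_le fun c => ?_
  simp only [ENNReal.mul_iSup]
  refine iSup_le fun r => iSup_le fun hr => iSup_le fun ha => iSup_le fun hb => ?_
  rw [mem_closedBall] at ha hb
  have hab : dist a b ≤ 2 * r := by linarith [dist_triangle_right a b c]
  have hbig : ∀ p, dist p b ≤ R → p ∈ closedBall c (r + R) := fun p hp =>
    mem_closedBall.2 (by linarith [dist_triangle p b c])
  calc ENNReal.ofReal (dist a b) *
        ((∫⁻ u in closedBall c r, w u) / volume (closedBall c r)) ^ (1 / q)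
      ≤ ENNReal.ofReal (dist a b) * (ENNReal.ofReal ((r + R) / r) *
          ((∫⁻ u in closedBall c (r + R), w u) / volume (closedBall c (r + R))) ^ (1 / q)) := by
        gcongr
        exact rpow_average_closedBall_le_of_le volume (by simpa using hq) w c hr (by linarith)
    _ ≤ ENNReal.ofReal (dist a b) * (ENNReal.ofReal ((r + R) / r) * cubeSup n q w u v) := by
        gcongr
        exact le_cubeSup w (by linarith) (hbig u hu) (hbig v hv)
    _ = ENNReal.ofReal (dist a b * ((r + R) / r)) * cubeSup n q w u v := by
        rw [← mul_assoc, ← ENNReal.ofReal_mul dist_nonneg]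
    _ ≤ ENNReal.ofReal (dist a b + 2 * R) * cubeSup n q w u v := by
        gcongr
        rw [mul_div_assoc', div_le_iff₀ hr]
        nlinarith [dist_nonneg (x := a) (y := b)]

theorem deltaQ_mul_sum_dist_le (hq : (n : ℝ) ≤ q) {a b : Fin n → ℝ} {R : ℝ} (m : ℕ)
    (zc : ℕ → Fin n → ℝ) (hR : ∀ j ≤ m, dist (zc j) b ≤ R) :
    deltaQ n q w a b * ENNReal.ofReal (∑ i ∈ range m, dist (zc i) (zc (i + 1))) ≤
      ENNReal.ofReal (dist a b + 2 * R) * ∑ i ∈ range m, deltaQ n q w (zc i) (zc (i + 1)) := by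
  rw [ENNReal.ofReal_sum_of_nonneg fun _ _ => dist_nonneg, mul_sum, mul_sum]
  refine sum_le_sum fun i hi => ?_
  rw [mem_range] at hi
  calc deltaQ n q w a b * ENNReal.ofReal (dist (zc i) (zc (i + 1)))
      ≤ ENNReal.ofReal (dist a b + 2 * R) * cubeSup n q w (zc i) (zc (i + 1)) *
          ENNReal.ofReal (dist (zc i) (zc (i + 1))) := by
        gcongr
        exact deltaQ_le_mul_cubeSup hq (hR i hi.le) (hR (i + 1) hi)
    _ = _ := by rw [deltaQ_eq, mul_assoc, mul_comm (cubeSup _ _ _ _ _)]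

theorem deltaQ_le_five_mul_sum (hq : (n : ℝ) ≤ q) {x z : Fin n → ℝ} (m : ℕ)
    (zc : ℕ → Fin n → ℝ) (h0 : zc 0 = x)
    (hxz : dist x z ≤ ∑ i ∈ range m, dist (zc i) (zc (i + 1))) :
    deltaQ n q w x z ≤ 5 * ∑ i ∈ range m, deltaQ n q w (zc i) (zc (i + 1)) := by
  set L := ∑ i ∈ range m, dist (zc i) (zc (i + 1))
  rcases (dist_nonneg.trans hxz).eq_or_lt with hL | hL
  · rw [← hL] at hxz
    rw [dist_le_zero.1 hxz, deltaQ_eq, dist_self, ENNReal.ofReal_zero, zero_mul]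
    exact zero_le
  have hR : ∀ j ≤ m, dist (zc j) z ≤ dist x z + L := fun j hj => by
    have hjx : dist (zc j) x ≤ L := by
      rw [← h0, dist_comm]
      exact (dist_le_range_sum_dist zc j).trans <| sum_le_sum_of_subset_of_nonneg
        (range_subset_range.2 hj) fun _ _ _ => dist_nonneg
    linarith [dist_triangle (zc j) x z]
  rw [← ENNReal.mul_le_mul_iff_left (ENNReal.ofReal_pos.2 hL).ne' ENNReal.ofReal_ne_top]
  calc deltaQ n q w x z * ENNReal.ofReal L
      ≤ ENNReal.ofReal (dist x z + 2 * (dist x z + L)) *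
          ∑ i ∈ range m, deltaQ n q w (zc i) (zc (i + 1)) :=
        deltaQ_mul_sum_dist_le hq m zc hR
    _ ≤ ENNReal.ofReal (5 * L) * ∑ i ∈ range m, deltaQ n q w (zc i) (zc (i + 1)) := by
        gcongr
        linarith
    _ = _ := by
        rw [ENNReal.ofReal_mul (by norm_num), ENNReal.ofReal_ofNat]
        ring

theorem geoQ_le_five_mul_geoQ (hq : (n : ℝ) ≤ q) {x y z : Fin n → ℝ}
    (hxz : dist x z ≤ dist x y) : geoQ n q w x z ≤ 5 * geoQ n q w x y := by
  have hδ : deltaQ n q w x z / 5 ≤ geoQ n q w x y :=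
    le_iInf fun m => le_iInf fun zc => le_iInf fun h0 => le_iInf fun hm =>
      ENNReal.div_le_of_le_mul' <| deltaQ_le_five_mul_sum hq m zc h0 <|
        hxz.trans (h0 ▸ hm ▸ dist_le_range_sum_dist zc m)
  rw [ENNReal.div_le_iff (by norm_num) (by norm_num), mul_comm] at hδ
  exact (geoQ_le_deltaQ w x z).trans hδ

theorem geoQ_add_geoQ_le_of_mem_segment (hq : (n : ℝ) ≤ q) {x y z : Fin n → ℝ}
    (hz : z ∈ segment ℝ x y) :
    geoQ n q w x z + geoQ n q w z y ≤ 10 * geoQ n q w x y := by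
  have hsum := dist_add_dist_of_mem_segment hz
  have hxz : dist x z ≤ dist x y := by linarith [dist_nonneg (x := z) (y := y)]
  have hyz : dist y z ≤ dist y x := by
    rw [dist_comm y z, dist_comm y x]; linarith [dist_nonneg (x := x) (y := z)]
  calc geoQ n q w x z + geoQ n q w z y ≤ 5 * geoQ n q w x y + 5 * geoQ n q w y x := by
        rw [geoQ_comm w z y]
        exact add_le_add (geoQ_le_five_mul_geoQ hq hxz) (geoQ_le_five_mul_geoQ hq hyz)
    _ = 10 * geoQ n q w x y := by
        rw [geoQ_comm w y x, ← add_mul]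
        norm_num

end Geodesic

theorem stmt_4_general (n : ℕ) (q : ℝ) (hq : (n : ℝ) ≤ q)
    (h : (Fin n → ℝ) → ℝ)
    (x y z : Fin n → ℝ) (hz : z ∈ openSegment ℝ x y) :
    geoQ n q (fun u => ENNReal.ofReal (h u) ^ q) x z +
        geoQ n q (fun u => ENNReal.ofReal (h u) ^ q) z y ≤
      64 * geoQ n q (fun u => ENNReal.ofReal (h u) ^ q) x y :=
  (geoQ_add_geoQ_le_of_mem_segment hq (openSegment_subset_segment ℝ x y hz)).trans <|
    by gcongr; norm_num

theorem stmt_4 (n : ℕ) (q p : ℝ) (hq : (n : ℝ) ≤ q) (hqp : q ≤ p)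
    (h : (Fin n → ℝ) → ℝ) (hh : ∀ u, 0 ≤ h u)
    (hmem : MemLp h (ENNReal.ofReal p) volume)
    (x y z : Fin n → ℝ) (hz : z ∈ openSegment ℝ x y) :
    geoQ n q (fun u => ENNReal.ofReal (h u) ^ q) x z +
        geoQ n q (fun u => ENNReal.ofReal (h u) ^ q) z y ≤
      64 * geoQ n q (fun u => ENNReal.ofReal (h u) ^ q) x y :=
  stmt_4_general n q hq h x y z hz
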